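/- Let Γ and Δ = {1,…,d} be finite sets, K ≤ Sym(Γ), L ≤ Sym(Δ), and m ≥ 2 an integer. If h ∈ (K↑L)^(m), written in the form h = (h_1,…,h_d; h̄) with h_1,…,h_d ∈ Sym(Γ) and h̄ ∈ Sym(Δ), then h_i ∈ K^(m) for every i = 1,…,d. -/

import Mathlib

/-! Test `h = (h_1,…,h_d; h̄)` on the `m`-tuple of points of `Γ^d` whose `j`-th entry is constant
with value `β_j`. Some `g = (g_1,…,g_d; ḡ) ∈ K↑L` agrees with `h` there, and reading off the
coordinate `h̄ i` gives `β^{h_i} = β^{g_{ḡ⁻¹(h̄ i)}}` with `g_{ḡ⁻¹(h̄ i)} ∈ K`. -/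

open Equiv MulAction Pointwise

/-- The `m`-closure of a permutation group `G ≤ Sym(Ω)`: the largest subgroup of `Sym(Ω)`
having the same orbits as `G` in the induced componentwise action on `Ω^m`. -/
def mClosure {Ω : Type*} (m : ℕ) (G : Subgroup (Equiv.Perm Ω)) : Subgroup (Equiv.Perm Ω) :=
  sSup {H : Subgroup (Equiv.Perm Ω) |
    ∀ α : Fin m → Ω, MulAction.orbit H α = MulAction.orbit G α}

/-- An ordered partition of `Ω` into at most `m` nonempty classes. -/
structure OrderedPartition (Ω : Type*) (m : ℕ) where
  classes : List (Set Ω)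
  length_le : classes.length ≤ m
  nonempty : ∀ s ∈ classes, s.Nonempty
  pairwise_disjoint : classes.Pairwise Disjoint
  covers : ∀ x : Ω, ∃ s ∈ classes, x ∈ s

namespace OrderedPartition

variable {Ω : Type*} {m : ℕ}

theorem ext' {P Q : OrderedPartition Ω m} (h : P.classes = Q.classes) : P = Q := by
  cases P; cases Q; simpa using h

/-- The natural action of a permutation on an ordered partition, classwise. -/
def act (f : Equiv.Perm Ω) (P : OrderedPartition Ω m) : OrderedPartition Ω m where
  classes := P.classes.map fun s => f '' s
  length_le := by simpa using P.length_le
  nonempty := by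
    intro s hs
    obtain ⟨t, ht, rfl⟩ := List.mem_map.mp hs
    exact (P.nonempty t ht).image _
  pairwise_disjoint :=
    P.pairwise_disjoint.map _ fun s t h => (Set.disjoint_image_iff f.injective).mpr h
  covers := by
    intro x
    obtain ⟨s, hs, hx⟩ := P.covers (f⁻¹ x)
    exact ⟨f '' s, List.mem_map_of_mem hs, f⁻¹ x, hx, by simp⟩

instance : SMul (Equiv.Perm Ω) (OrderedPartition Ω m) := ⟨act⟩

theorem smul_classes (f : Equiv.Perm Ω) (P : OrderedPartition Ω m) :
    (f • P).classes = P.classes.map fun s => f '' s := rfl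

instance : MulAction (Equiv.Perm Ω) (OrderedPartition Ω m) where
  one_smul P := ext' (by simp [smul_classes])
  mul_smul f g P := ext' (by
    simp [smul_classes, List.map_map, Function.comp_def, Set.image_image])

end OrderedPartition

/-- The partition `m`-closure `G^[m]` of a permutation group `G ≤ Sym(Ω)`: the largest
subgroup of `Sym(Ω)` having the same orbits as `G` in its induced action on the set of
ordered partitions of `Ω` into at most `m` nonempty classes. -/
def partClosure {Ω : Type*} (m : ℕ) (G : Subgroup (Equiv.Perm Ω)) : Subgroup (Equiv.Perm Ω) :=
  sSup {H : Subgroup (Equiv.Perm Ω) |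
    ∀ P : OrderedPartition Ω m, MulAction.orbit H P = MulAction.orbit G P}

/-- The element `(g_1, …, g_d; ḡ)` of the wreath product in product action:
`(ω^g)_i = (ω_{i^{ḡ⁻¹}})^{g_{i^{ḡ⁻¹}}}`. -/
def wreathElem {Γ Δ : Type*} (gs : Δ → Equiv.Perm Γ) (σ : Equiv.Perm Δ) :
    Equiv.Perm (Δ → Γ) where
  toFun ω i := gs (σ⁻¹ i) (ω (σ⁻¹ i))
  invFun ω i := (gs i)⁻¹ (ω (σ i))
  left_inv ω := by funext i; simp
  right_inv ω := by funext i; simp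

theorem wreathElem_apply {Γ Δ : Type*} (gs : Δ → Equiv.Perm Γ) (σ : Equiv.Perm Δ)
    (ω : Δ → Γ) (i : Δ) : wreathElem gs σ ω i = gs (σ⁻¹ i) (ω (σ⁻¹ i)) := rfl

theorem wreathElem_one {Γ Δ : Type*} :
    wreathElem (fun _ : Δ => (1 : Equiv.Perm Γ)) 1 = 1 := by
  refine Equiv.ext fun ω => funext fun i => ?_
  simp [wreathElem_apply]

theorem wreathElem_mul {Γ Δ : Type*} (gs hs : Δ → Equiv.Perm Γ) (σ τ : Equiv.Perm Δ) :
    wreathElem gs σ * wreathElem hs τ = wreathElem (fun j => gs (τ j) * hs j) (σ * τ) := by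
  refine Equiv.ext fun ω => funext fun i => ?_
  simp [wreathElem_apply, Equiv.Perm.mul_apply, mul_inv_rev]

theorem wreathElem_inv {Γ Δ : Type*} (gs : Δ → Equiv.Perm Γ) (σ : Equiv.Perm Δ) :
    (wreathElem gs σ)⁻¹ = wreathElem (fun j => (gs (σ⁻¹ j))⁻¹) σ⁻¹ := by
  rw [inv_eq_iff_mul_eq_one, wreathElem_mul]
  simpa using wreathElem_one

/-- The wreath product `K ↑ L` of `K ≤ Sym(Γ)` and `L ≤ Sym(Δ)` in product action,
as a subgroup of `Sym(Γ^Δ)`. -/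
def wreathProduct {Γ Δ : Type*} (K : Subgroup (Equiv.Perm Γ)) (L : Subgroup (Equiv.Perm Δ)) :
    Subgroup (Equiv.Perm (Δ → Γ)) where
  carrier := {h | ∃ (gs : Δ → Equiv.Perm Γ) (σ : Equiv.Perm Δ),
    (∀ i, gs i ∈ K) ∧ σ ∈ L ∧ h = wreathElem gs σ}
  one_mem' := ⟨fun _ => 1, 1, fun _ => K.one_mem, L.one_mem, wreathElem_one.symm⟩
  mul_mem' := by
    rintro f h ⟨gs, σ, hgs, hσ, rfl⟩ ⟨hs, τ, hhs, hτ, rfl⟩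
    exact ⟨fun j => gs (τ j) * hs j, σ * τ, fun j => K.mul_mem (hgs _) (hhs _),
      L.mul_mem hσ hτ, wreathElem_mul gs hs σ τ⟩
  inv_mem' := by
    rintro f ⟨gs, σ, hgs, hσ, rfl⟩
    exact ⟨fun j => (gs (σ⁻¹ j))⁻¹, σ⁻¹, fun j => K.inv_mem (hgs _), L.inv_mem hσ,
      wreathElem_inv gs σ⟩

/-- `k_m`: the number of orbits of `K ≤ Sym(Γ)` in its componentwise action on `Γ^m`. -/
noncomputable def numOrbits {Γ : Type*} (m : ℕ) (K : Subgroup (Equiv.Perm Γ)) : ℕ :=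
  Nat.card (MulAction.orbitRel.Quotient K (Fin m → Γ))

/-- A permutation group `L ≤ Sym(Δ)` is primitive if it is transitive and preserves
no nontrivial partition of `Δ` (partitions being identified with equivalence relations). -/
def IsPrimitiveSubgroup {Δ : Type*} (L : Subgroup (Equiv.Perm Δ)) : Prop :=
  (∀ x y : Δ, ∃ g ∈ L, g x = y) ∧
  ∀ r : Setoid Δ, (∀ g ∈ L, ∀ x y : Δ, r.r x y → r.r (g x) (g y)) → r = ⊥ ∨ r = ⊤

/-- The direct product `K × L ≤ Sym(Γ × Δ)` acting coordinatewise on `Γ × Δ`. -/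
def prodSubgroup {Γ Δ : Type*} (K : Subgroup (Equiv.Perm Γ)) (L : Subgroup (Equiv.Perm Δ)) :
    Subgroup (Equiv.Perm (Γ × Δ)) where
  carrier := {h | ∃ k ∈ K, ∃ l ∈ L, h = Equiv.prodCongr k l}
  one_mem' := ⟨1, K.one_mem, 1, L.one_mem, Equiv.ext fun x => rfl⟩
  mul_mem' := by
    rintro f h ⟨k₁, hk₁, l₁, hl₁, rfl⟩ ⟨k₂, hk₂, l₂, hl₂, rfl⟩
    exact ⟨k₁ * k₂, K.mul_mem hk₁ hk₂, l₁ * l₂, L.mul_mem hl₁ hl₂, Equiv.ext fun x => rfl⟩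
  inv_mem' := by
    rintro f ⟨k, hk, l, hl, rfl⟩
    exact ⟨k⁻¹, K.inv_mem hk, l⁻¹, L.inv_mem hl, Equiv.ext fun x => rfl⟩

/-- Given an enumeration (via `sIdx`) of the orbits of `K` on `Γ^m` by `Fin a`,
and `α ∈ Ω^m` with `Ω = Γ^d` viewed as a `d × m` matrix with rows `α[i] = (j ↦ α j i)`,
`piClasses sIdx α` is the ordered partition `Π(α)` of `Δ = Fin d` whose `ℓ`-th class
consists of the `i` whose row `α[i]` lies in the orbit with the `ℓ`-th smallest
occurring index. -/
def piClasses {Γ : Type*} {d m a : ℕ} (sIdx : (Fin m → Γ) → Fin a)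
    (α : Fin m → (Fin d → Γ)) : List (Set (Fin d)) :=
  ((Finset.univ.image fun i : Fin d => sIdx fun j => α j i).sort (· ≤ ·)).map
    fun t => {i : Fin d | sIdx (fun j => α j i) = t}

namespace Subgroup

def orbitPreserving {M : Type*} [Group M] (G : Subgroup M) (X : Type*) [MulAction M X] :
    Subgroup M where
  carrier := {f | ∀ x : X, f • x ∈ orbit G x}
  one_mem' x := by rw [one_smul]; exact mem_orbit_self x
  mul_mem' {f g} hf hg x := by
    rw [mul_smul, ← orbit_eq_iff.mpr (hg x)]
    exact hf (g • x)
  inv_mem' {f} hf x := by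
    simpa using mem_orbit_symm.mp (hf (f⁻¹ • x))

variable {M X : Type*} [Group M] [MulAction M X]

theorem mem_orbitPreserving_iff {G : Subgroup M} {f : M} :
    f ∈ G.orbitPreserving X ↔ ∀ x : X, f • x ∈ orbit G x :=
  Iff.rfl

theorem orbitPreserving_orbit_eq (G : Subgroup M) (x : X) :
    orbit (G.orbitPreserving X) x = orbit G x := by
  refine le_antisymm ?_ ?_
  · rintro _ ⟨⟨f, hf⟩, rfl⟩
    exact hf x
  · rintro _ ⟨⟨g, hg⟩, rfl⟩
    exact ⟨⟨g, fun y => ⟨⟨g, hg⟩, rfl⟩⟩, rfl⟩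

theorem sSup_orbit_eq_eq_orbitPreserving (G : Subgroup M) :
    sSup {H : Subgroup M | ∀ x : X, orbit H x = orbit G x} = G.orbitPreserving X := by
  refine le_antisymm (sSup_le fun H hH h hh x => ?_) (le_sSup (orbitPreserving_orbit_eq G))
  rw [← hH x]
  exact ⟨⟨h, hh⟩, rfl⟩

end Subgroup

theorem mem_mClosure_iff {Ω : Type*} {m : ℕ} {G : Subgroup (Equiv.Perm Ω)}
    {f : Equiv.Perm Ω} :
    f ∈ mClosure m G ↔ ∀ α : Fin m → Ω, f • α ∈ orbit G α := by
  rw [mClosure, Subgroup.sSup_orbit_eq_eq_orbitPreserving, Subgroup.mem_orbitPreserving_iff]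

theorem wreathElem_smul_const_apply {Γ Δ ι : Type*} (gs : Δ → Equiv.Perm Γ)
    (σ : Equiv.Perm Δ) (β : ι → Γ) (k : Δ) :
    (fun j => (wreathElem gs σ • fun j (_ : Δ) => β j) j k) = gs (σ⁻¹ k) • β :=
  rfl

theorem components_mem_mClosure_general {Γ : Type*} {d : ℕ}
    (K : Subgroup (Equiv.Perm Γ)) (L : Subgroup (Equiv.Perm (Fin d)))
    (m : ℕ)
    (hs : Fin d → Equiv.Perm Γ) (σ : Equiv.Perm (Fin d))
    (hh : wreathElem hs σ ∈ mClosure m (wreathProduct K L)) :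
    ∀ i, hs i ∈ mClosure m K := by
  intro i
  rw [mem_mClosure_iff] at hh ⊢
  intro β
  obtain ⟨⟨g, hg_mem⟩, hg⟩ := hh (fun j _ => β j)
  simp only [Subgroup.mk_smul] at hg
  obtain ⟨gs, τ, hgs, -, rfl⟩ := hg_mem
  refine ⟨⟨gs (τ⁻¹ (σ i)), hgs _⟩, ?_⟩
  have h_coord := congrArg (fun α j => α j (σ i)) hg
  simpa only [Subgroup.mk_smul, wreathElem_smul_const_apply, Perm.coe_inv,
    symm_apply_apply] using h_coord

/-- If `h = (h_1,…,h_d; h̄) ∈ (K↑L)^(m)` with `m ≥ 2`, then `h_i ∈ K^(m)` for all `i`. -/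
theorem components_mem_mClosure {Γ : Type*} [Fintype Γ] {d : ℕ}
    (K : Subgroup (Equiv.Perm Γ)) (L : Subgroup (Equiv.Perm (Fin d)))
    (m : ℕ) (hm : 2 ≤ m)
    (hs : Fin d → Equiv.Perm Γ) (σ : Equiv.Perm (Fin d))
    (hh : wreathElem hs σ ∈ mClosure m (wreathProduct K L)) :
    ∀ i, hs i ∈ mClosure m K :=
  components_mem_mClosure_general K L m hs σ hh
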